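/- Let B ≥ 2, let E be a B×B equi-transmitting matrix in standard form, let L ∈ ℝ^B and k ∈ ℝ, and let U be the 2B×2B unitary matrix [[0, Δ E],[Δ, 0]] where Δ = diag(e^{ikL_1}, …, e^{ikL_B}). Then every nonzero eigenvector a ∈ ℂ^{2B} of U satisfies S(a) ≥ (1/2) log(B−1) + log 2, and for every σ with 0 < σ < 1 it satisfies R_{σ/(1−σ)}(a) + R_{−σ/(1+σ)}(a) ≥ log(B−1) + 2 log 2. -/

import Mathlib

open Matrix

noncomputable section

/-- Shannon entropy of a vector (convention `0 · log 0 = 0`). -/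
def shannonEnt {n : Type*} [Fintype n] (x : n → ℂ) : ℝ :=
  -∑ j, (‖x j‖ ^ 2 / ∑ i, ‖x i‖ ^ 2) * Real.log (‖x j‖ ^ 2 / ∑ i, ‖x i‖ ^ 2)

/-- Rényi entropy of a vector, for a parameter `ρ`. -/
def renyiEnt {n : Type*} [Fintype n] (ρ : ℝ) (x : n → ℂ) : ℝ :=
  -(1 / ρ) * Real.log (∑ j, (‖x j‖ ^ 2 / ∑ i, ‖x i‖ ^ 2) ^ (1 + ρ))

/-- A `B × B` matrix is *equi-transmitting in standard form* if it is unitary,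
has zero diagonal, all off-diagonal entries of absolute value `1/√(B-1)`,
and all off-diagonal entries in the first row and first column equal to
`1/√(B-1)`. -/
def IsEquiTransStd {B : ℕ} (E : Matrix (Fin B) (Fin B) ℂ) : Prop :=
  E ∈ Matrix.unitaryGroup (Fin B) ℂ ∧
  (∀ i, E i i = 0) ∧
  (∀ i j, i ≠ j → ‖E i j‖ = 1 / Real.sqrt ((B : ℝ) - 1)) ∧
  (∀ i j : Fin B, ((i : ℕ) = 0 ∨ (j : ℕ) = 0) → i ≠ j →
    E i j = ((1 / Real.sqrt ((B : ℝ) - 1) : ℝ) : ℂ))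


/-!
Write an eigenvector as `a = (x, y)`. The block structure of `U` gives `Δ E y = μ x` and
`Δ x = μ y`; as `Δ` is a unimodular diagonal and `E` is unitary, `|μ| = 1`, so `|x| = |y|` and
`|E y| = |y|` entrywise. Hence every entropy of `a` is `log 2` plus that of `y`, and `y` is, in
modulus, a fixed point of `E`. Now `E` is an `ℓ²` contraction and maps `ℓ¹` to `ℓ^∞` with norm
`max |E i j| = (B - 1)^(-1/2)`, so Riesz–Thorin interpolation (proved with Hadamard's three-lines
theorem) gives `‖E y‖_{2/(1-σ)} ≤ (B - 1)^(-σ/2) ‖y‖_{2/(1+σ)}`, which is exactly the Rényi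
bound. Both Rényi entropies tend to the Shannon entropy as `σ → 0`.
-/

open Finset Filter Topology

/-- `u * |u| ^ (s - 1)`, written so that it is entire in `s` and vanishes at `u = 0`. -/
def phasePow (u s : ℂ) : ℂ := u * Complex.exp ((s - 1) * Real.log ‖u‖)

theorem norm_phasePow_le (u s : ℂ) : ‖phasePow u s‖ ≤ ‖u‖ ^ s.re := by
  rcases eq_or_ne u 0 with rfl | hu
  · simp only [phasePow, zero_mul, norm_zero]
    positivity
  · have hu' : 0 < ‖u‖ := norm_pos_iff.2 hu
    refine le_of_eq ?_
    rw [phasePow, norm_mul, Complex.norm_exp, Complex.re_mul_ofReal, Complex.sub_re,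
      Complex.one_re, mul_comm _ (Real.log _), ← Real.rpow_def_of_pos hu',
      Real.rpow_sub_one hu'.ne']
    field_simp

theorem phasePow_one (u : ℂ) : phasePow u 1 = u := by simp [phasePow]

theorem phasePow_star_mul_self (u : ℂ) {t : ℝ} (ht : t ≠ 0) :
    phasePow (star u) (t - 1) * u = ((‖u‖ ^ t : ℝ) : ℂ) := by
  rcases eq_or_ne u 0 with rfl | hu
  · simp [phasePow, Real.zero_rpow ht]
  · have hu' : 0 < ‖u‖ := norm_pos_iff.2 hu
    have hexp : Complex.exp ((t - 1 - 1) * Real.log ‖u‖) = ((‖u‖ ^ (t - 2) : ℝ) : ℂ) := by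
      rw [Real.rpow_def_of_pos hu', Complex.ofReal_exp]
      push_cast; ring_nf
    rw [phasePow, norm_star, hexp, mul_right_comm, Complex.star_def, Complex.conj_mul',
      ← Complex.ofReal_pow, ← Complex.ofReal_mul, ← Real.rpow_natCast, ← Real.rpow_add hu']
    norm_num

theorem differentiable_phasePow (u : ℂ) : Differentiable ℂ (phasePow u) := by
  unfold phasePow
  fun_prop

section Interpolation

variable {n : Type*}

/-- On `re z = 0` its entries have modulus `|u i| ^ (e / 2)`, on `re z = 1` modulus `|u i| ^ e`. -/
def phasePowVec (u : n → ℂ) (e : ℝ) (z : ℂ) : n → ℂ :=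
  fun i => phasePow (u i) (e / 2 * (1 + z))

theorem norm_phasePowVec_le (u : n → ℂ) (e : ℝ) (z : ℂ) (i : n) :
    ‖phasePowVec u e z i‖ ≤ ‖u i‖ ^ (e / 2 * (1 + z.re)) :=
  (norm_phasePow_le _ _).trans_eq (by simp)

theorem sum_norm_sq_phasePowVec_le [Fintype n] (u : n → ℂ) (e : ℝ) {z : ℂ} (hz : z.re = 0) :
    ∑ i, ‖phasePowVec u e z i‖ ^ 2 ≤ ∑ i, ‖u i‖ ^ e := by
  gcongr with i
  calc ‖phasePowVec u e z i‖ ^ 2 ≤ (‖u i‖ ^ (e / 2)) ^ 2 := by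
        gcongr; simpa [hz] using norm_phasePowVec_le u e z i
    _ = ‖u i‖ ^ e := by rw [← Real.rpow_mul_natCast (norm_nonneg _)]; norm_num

theorem sum_norm_phasePowVec_le [Fintype n] (u : n → ℂ) (e : ℝ) {z : ℂ} (hz : z.re = 1) :
    ∑ i, ‖phasePowVec u e z i‖ ≤ ∑ i, ‖u i‖ ^ e := by
  gcongr with i
  simpa [hz, one_add_one_eq_two] using norm_phasePowVec_le u e z i

theorem sum_norm_phasePowVec_le_of_mem_verticalClosedStrip [Fintype n] (u : n → ℂ) {e : ℝ}
    (he : 0 ≤ e) {z : ℂ} (hz : z ∈ Complex.HadamardThreeLines.verticalClosedStrip 0 1) :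
    ∑ i, ‖phasePowVec u e z i‖ ≤ ∑ i, max 1 ‖u i‖ ^ e := by
  obtain ⟨hz₀, hz₁⟩ : 0 ≤ z.re ∧ z.re ≤ 1 := hz
  gcongr with i
  calc ‖phasePowVec u e z i‖ ≤ ‖u i‖ ^ (e / 2 * (1 + z.re)) := norm_phasePowVec_le u e z i
    _ ≤ max 1 ‖u i‖ ^ (e / 2 * (1 + z.re)) := by gcongr; exact le_max_right _ _
    _ ≤ max 1 ‖u i‖ ^ e :=
      Real.rpow_le_rpow_of_exponent_le (le_max_left _ _) (by nlinarith)

@[fun_prop]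
theorem differentiable_phasePowVec_apply (u : n → ℂ) (e : ℝ) (i : n) :
    Differentiable ℂ fun z => phasePowVec u e z i :=
  (differentiable_phasePow _).comp (by fun_prop)

theorem phasePowVec_self (v : n → ℂ) {σ : ℝ} (hσ : 1 + σ ≠ 0) :
    phasePowVec v (2 / (1 + σ)) σ = v := by
  have h : ((2 / (1 + σ) : ℝ) : ℂ) / 2 * (1 + σ) = 1 := by
    exact_mod_cast show (2 / (1 + σ)) / 2 * (1 + σ) = 1 by field_simp
  exact funext fun j => by simp only [phasePowVec, h, phasePow_one]

theorem star_phasePowVec_dotProduct_self [Fintype n] (w : n → ℂ) {σ : ℝ} (hσ : 1 - σ ≠ 0) :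
    phasePowVec (star w) (2 / (1 - σ)) σ ⬝ᵥ w = ∑ i, ‖w i‖ ^ (2 / (1 - σ)) := by
  have h : ((2 / (1 - σ) : ℝ) : ℂ) / 2 * (1 + σ) = ((2 / (1 - σ) : ℝ) : ℂ) - 1 := by
    exact_mod_cast show (2 / (1 - σ)) / 2 * (1 + σ) = 2 / (1 - σ) - 1 by field_simp; ring
  simp only [phasePowVec, h, dotProduct, Pi.star_apply, Complex.ofReal_sum]
  exact sum_congr rfl fun i _ => phasePow_star_mul_self (w i) (by positivity)

theorem norm_dotProduct_mulVec_le_sqrt_mul_sqrt [Fintype n] {E : Matrix n n ℂ}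
    (hE : ∀ u, ∑ i, ‖(E *ᵥ u) i‖ ^ 2 ≤ ∑ i, ‖u i‖ ^ 2) (a b : n → ℂ) :
    ‖a ⬝ᵥ E *ᵥ b‖ ≤ √(∑ i, ‖a i‖ ^ 2) * √(∑ i, ‖b i‖ ^ 2) :=
  calc ‖a ⬝ᵥ E *ᵥ b‖ ≤ ∑ i, ‖a i‖ * ‖(E *ᵥ b) i‖ :=
        (norm_sum_le _ _).trans_eq (by simp only [norm_mul])
    _ ≤ √(∑ i, ‖a i‖ ^ 2) * √(∑ i, ‖(E *ᵥ b) i‖ ^ 2) := Real.sum_mul_le_sqrt_mul_sqrt _ _ _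
    _ ≤ √(∑ i, ‖a i‖ ^ 2) * √(∑ i, ‖b i‖ ^ 2) := by gcongr 2; exact hE b

theorem norm_dotProduct_mulVec_le_mul_sum_mul_sum [Fintype n] {E : Matrix n n ℂ} {c : ℝ}
    (hE : ∀ i j, ‖E i j‖ ≤ c) (a b : n → ℂ) :
    ‖a ⬝ᵥ E *ᵥ b‖ ≤ c * (∑ i, ‖a i‖) * ∑ j, ‖b j‖ :=
  calc ‖a ⬝ᵥ E *ᵥ b‖ ≤ ∑ i, ‖a i‖ * ∑ j, ‖E i j‖ * ‖b j‖ := by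
        refine (norm_sum_le _ _).trans (sum_le_sum fun i _ => ?_)
        rw [norm_mul]
        gcongr
        exact (norm_sum_le _ _).trans_eq (by simp only [norm_mul])
    _ ≤ ∑ i, ‖a i‖ * ∑ j, c * ‖b j‖ := by gcongr; exact hE _ _
    _ = c * (∑ i, ‖a i‖) * ∑ j, ‖b j‖ := by rw [← mul_sum, ← sum_mul]; ring

theorem rpow_le_mul_rpow_of_le_interp {A V c σ : ℝ} (hA : 0 ≤ A) (hV : 0 ≤ V) (hc : 0 ≤ c)
    (hσ₀ : 0 ≤ σ) (hσ₁ : σ < 1) (h : A ≤ (√A * √V) ^ (1 - σ) * (c * A * V) ^ σ) :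
    A ^ ((1 - σ) / 2) ≤ c ^ σ * V ^ ((1 + σ) / 2) := by
  rcases hA.eq_or_lt with rfl | hA
  · rw [Real.zero_rpow (by linarith)]
    positivity
  have hsplit : A = A ^ ((1 - σ) / 2) * A ^ ((1 + σ) / 2) := by
    rw [← Real.rpow_add hA]; ring_nf; rw [Real.rpow_one]
  have hbound : (√A * √V) ^ (1 - σ) * (c * A * V) ^ σ
      = c ^ σ * V ^ ((1 + σ) / 2) * A ^ ((1 + σ) / 2) := by
    have hexp : (1 + σ) / 2 = 1 / 2 * (1 - σ) + σ := by ring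
    rw [Real.sqrt_eq_rpow, Real.sqrt_eq_rpow, Real.mul_rpow (by positivity) (by positivity),
      Real.mul_rpow (by positivity) hV, Real.mul_rpow hc hA.le, ← Real.rpow_mul hA.le,
      ← Real.rpow_mul hV, hexp, Real.rpow_add hA, Real.rpow_add' hV (by linarith)]
    ring
  rw [hbound] at h
  nth_rw 1 [hsplit] at h
  exact le_of_mul_le_mul_right h (by positivity)

open Complex.HadamardThreeLines in
theorem rpow_sum_norm_mulVec_le [Fintype n] {E : Matrix n n ℂ} {c σ : ℝ}
    (hE₂ : ∀ u, ∑ i, ‖(E *ᵥ u) i‖ ^ 2 ≤ ∑ i, ‖u i‖ ^ 2) (hc : 0 ≤ c) (hE₁ : ∀ i j, ‖E i j‖ ≤ c)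
    (hσ₀ : 0 ≤ σ) (hσ₁ : σ < 1) (v : n → ℂ) :
    (∑ i, ‖(E *ᵥ v) i‖ ^ (2 / (1 - σ))) ^ ((1 - σ) / 2) ≤
      c ^ σ * (∑ j, ‖v j‖ ^ (2 / (1 + σ))) ^ ((1 + σ) / 2) := by
  set p := 2 / (1 + σ)
  set q := 2 / (1 - σ)
  set w := E *ᵥ v
  set A := ∑ i, ‖w i‖ ^ q
  set V := ∑ j, ‖v j‖ ^ p
  have hA : ∑ i, ‖star w i‖ ^ q = A := by simp only [Pi.star_apply, norm_star, A]
  -- the interpolating function of the Riesz–Thorin proof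
  let F : ℂ → ℂ := fun z => phasePowVec (star w) q z ⬝ᵥ E *ᵥ phasePowVec v p z
  have hFσ : F σ = A := by
    change phasePowVec (star w) q σ ⬝ᵥ E *ᵥ phasePowVec v p σ = A
    rw [phasePowVec_self v (by linarith)]
    exact star_phasePowVec_dotProduct_self w (by linarith)
  have hF : Differentiable ℂ F := by
    simp only [F, dotProduct, mulVec]
    fun_prop
  have hbdd : BddAbove ((norm ∘ F) '' verticalClosedStrip 0 1) := by
    refine ⟨c * (∑ i, max 1 ‖star w i‖ ^ q) * ∑ j, max 1 ‖v j‖ ^ p, ?_⟩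
    rintro _ ⟨z, hz, rfl⟩
    refine (norm_dotProduct_mulVec_le_mul_sum_mul_sum hE₁ _ _).trans ?_
    gcongr c * ?_ * ?_ <;>
      exact sum_norm_phasePowVec_le_of_mem_verticalClosedStrip _ (by positivity) hz
  have h₀ : ∀ z ∈ Complex.re ⁻¹' {0}, ‖F z‖ ≤ √A * √V := fun z hz =>
    (norm_dotProduct_mulVec_le_sqrt_mul_sqrt hE₂ _ _).trans <| by
      rw [← hA]
      gcongr √?_ * √?_ <;> exact sum_norm_sq_phasePowVec_le _ _ hz
  have h₁ : ∀ z ∈ Complex.re ⁻¹' {1}, ‖F z‖ ≤ c * A * V := fun z hz =>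
    (norm_dotProduct_mulVec_le_mul_sum_mul_sum hE₁ _ _).trans <| by
      rw [← hA]
      gcongr c * ?_ * ?_ <;> exact sum_norm_phasePowVec_le _ _ hz
  have hσ : (σ : ℂ) ∈ verticalClosedStrip 0 1 := by
    rw [verticalClosedStrip, Set.mem_preimage, Complex.ofReal_re]
    exact ⟨hσ₀, hσ₁.le⟩
  have h := norm_le_interp_of_mem_verticalClosedStrip₀₁' F hσ hF.diffContOnCl hbdd h₀ h₁
  rw [hFσ, Complex.ofReal_re, Complex.norm_real, Real.norm_of_nonneg (by positivity)] at h
  exact rpow_le_mul_rpow_of_le_interp (by positivity) (by positivity) hc hσ₀ hσ₁ h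

end Interpolation

theorem sum_norm_rpow_pos {n : Type*} [Fintype n] {v : n → ℂ} (hv : v ≠ 0) (t : ℝ) :
    0 < ∑ i, ‖v i‖ ^ t := by
  obtain ⟨j, hj⟩ := Function.ne_iff.mp hv
  exact sum_pos' (fun i _ => by positivity)
    ⟨j, mem_univ _, Real.rpow_pos_of_pos (norm_pos_iff.2 hj) t⟩

theorem comp_inr_ne_zero_of_norm_inl_eq {n : Type*} {a : n ⊕ n → ℂ} (ha : a ≠ 0)
    (h : ∀ j, ‖a (.inl j)‖ = ‖a (.inr j)‖) : a ∘ Sum.inr ≠ 0 := by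
  contrapose! ha
  have hinr : ∀ j, a (.inr j) = 0 := congrFun ha
  ext (j | j)
  · simpa [hinr] using h j
  · exact hinr j

section StarGraph

variable {n : Type*} [Fintype n] [DecidableEq n]

theorem sum_norm_sq_mulVec_of_mem_unitaryGroup {E : Matrix n n ℂ} (hE : E ∈ unitaryGroup n ℂ)
    (u : n → ℂ) :
    ∑ i, ‖(E *ᵥ u) i‖ ^ 2 = ∑ i, ‖u i‖ ^ 2 := by
  have hnorm : ∀ x : n → ℂ, star x ⬝ᵥ x = ((∑ i, ‖x i‖ ^ 2 : ℝ) : ℂ) := fun x => by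
    simp [dotProduct, Complex.conj_mul']
  have h : star (E *ᵥ u) ⬝ᵥ E *ᵥ u = star u ⬝ᵥ u := by
    rw [star_mulVec, dotProduct_mulVec, vecMul_vecMul, ← star_eq_conjTranspose,
      mem_unitaryGroup_iff'.mp hE, vecMul_one]
  exact_mod_cast (hnorm _).symm.trans (h.trans (hnorm u))

theorem norm_inl_eq_norm_inr_of_fromBlocks_mulVec_eq_smul {d : n → ℂ} (hd : ∀ j, ‖d j‖ = 1)
    {E : Matrix n n ℂ} (hE : ∀ u, ∑ i, ‖(E *ᵥ u) i‖ ^ 2 = ∑ i, ‖u i‖ ^ 2) {a : n ⊕ n → ℂ}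
    (ha : a ≠ 0) {μ : ℂ}
    (h : fromBlocks 0 (diagonal d * E) (diagonal d) 0 *ᵥ a = μ • a) :
    (∀ j, ‖a (.inl j)‖ = ‖a (.inr j)‖) ∧ ∀ j, ‖(E *ᵥ (a ∘ .inr)) j‖ = ‖a (.inr j)‖ := by
  have hx : ∀ j, ‖a (.inl j)‖ = ‖μ‖ * ‖a (.inr j)‖ := fun j => by
    simpa [fromBlocks_mulVec, mulVec_diagonal, hd] using congrArg norm (congrFun h (.inr j))
  have hEy : ∀ j, ‖(E *ᵥ (a ∘ .inr)) j‖ = ‖μ‖ * ‖a (.inl j)‖ := fun j => by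
    simpa [fromBlocks_mulVec, ← mulVec_mulVec, mulVec_diagonal, hd] using
      congrArg norm (congrFun h (.inl j))
  have hy : a ∘ .inr ≠ 0 := by
    contrapose! ha
    ext (j | j)
    · simpa [show a (.inr j) = 0 from congrFun ha j] using hx j
    · exact congrFun ha j
  have hμ : ‖μ‖ = 1 := by
    have hpos : 0 < ∑ i, ‖(a ∘ .inr) i‖ ^ 2 := by simpa using sum_norm_rpow_pos hy 2
    have h4 : ‖μ‖ ^ 4 * ∑ i, ‖(a ∘ .inr) i‖ ^ 2 = 1 * ∑ i, ‖(a ∘ .inr) i‖ ^ 2 := by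
      rw [one_mul, mul_sum]
      conv_rhs => rw [← hE (a ∘ .inr)]
      exact sum_congr rfl fun j _ => by rw [hEy, hx, Function.comp_apply]; ring
    exact (pow_eq_one_iff_of_nonneg (norm_nonneg μ) four_ne_zero).mp
      (mul_right_cancel₀ hpos.ne' h4)
  simp only [hμ, one_mul] at hx hEy
  exact ⟨fun j => hx j, fun j => (hEy j).trans (hx j)⟩

end StarGraph

section Entropy

variable {n : Type*} [Fintype n]

theorem renyiEnt_eq {v : n → ℂ} (hv : v ≠ 0) (ρ : ℝ) :
    renyiEnt ρ v =
      ((1 + ρ) * Real.log (∑ i, ‖v i‖ ^ 2) - Real.log (∑ i, ‖v i‖ ^ (2 * (1 + ρ)))) / ρ := by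
  have hN : 0 < ∑ i, ‖v i‖ ^ 2 := by simpa using sum_norm_rpow_pos hv 2
  have hsum : ∑ j, (‖v j‖ ^ 2 / ∑ i, ‖v i‖ ^ 2) ^ (1 + ρ)
      = (∑ j, ‖v j‖ ^ (2 * (1 + ρ))) / (∑ i, ‖v i‖ ^ 2) ^ (1 + ρ) := by
    rw [sum_div]
    refine sum_congr rfl fun j _ => ?_
    rw [Real.div_rpow (by positivity) hN.le, ← Real.rpow_natCast, ← Real.rpow_mul (norm_nonneg _)]
    norm_num
  rw [renyiEnt, hsum, Real.log_div (sum_norm_rpow_pos hv _).ne' (by positivity),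
    Real.log_rpow hN]
  ring

theorem renyiEnt_eq_log_two_add {a : n ⊕ n → ℂ} (h : ∀ j, ‖a (.inl j)‖ = ‖a (.inr j)‖)
    (hy : a ∘ Sum.inr ≠ 0) {ρ : ℝ} (hρ : ρ ≠ 0) :
    renyiEnt ρ a = Real.log 2 + renyiEnt ρ (a ∘ Sum.inr) := by
  have ha : a ≠ 0 := by rintro rfl; exact hy rfl
  have hdouble : ∀ g : ℝ → ℝ, ∑ b, g ‖a b‖ = 2 * ∑ j, g ‖(a ∘ Sum.inr) j‖ := fun g => by
    simp only [Fintype.sum_sum_type, h, Function.comp_apply]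
    ring
  have h2 := hdouble (· ^ 2)
  have hρ' := hdouble (· ^ (2 * (1 + ρ)))
  beta_reduce at h2 hρ'
  rw [renyiEnt_eq ha, renyiEnt_eq hy, h2, hρ',
    Real.log_mul two_ne_zero (by simpa using (sum_norm_rpow_pos hy 2).ne'),
    Real.log_mul two_ne_zero (sum_norm_rpow_pos hy _).ne']
  field_simp
  ring

theorem neg_two_mul_log_le_renyiEnt_add_renyiEnt {v : n → ℂ} (hv : v ≠ 0) {c σ : ℝ} (hc : 0 < c)
    (hσ₀ : 0 < σ) (hσ₁ : σ < 1)
    (h : (∑ i, ‖v i‖ ^ (2 / (1 - σ))) ^ ((1 - σ) / 2) ≤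
      c ^ σ * (∑ i, ‖v i‖ ^ (2 / (1 + σ))) ^ ((1 + σ) / 2)) :
    -2 * Real.log c ≤ renyiEnt (σ / (1 - σ)) v + renyiEnt (-σ / (1 + σ)) v := by
  have hσp : 1 + σ ≠ 0 := by linarith
  have hσm : 1 - σ ≠ 0 := by linarith
  set A := ∑ i, ‖v i‖ ^ (2 / (1 - σ))
  set V := ∑ i, ‖v i‖ ^ (2 / (1 + σ))
  have hA : 0 < A := sum_norm_rpow_pos hv _
  have hV : 0 < V := sum_norm_rpow_pos hv _
  have hlog : (1 - σ) / 2 * Real.log A ≤ σ * Real.log c + (1 + σ) / 2 * Real.log V := by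
    have := Real.log_le_log (by positivity) h
    rwa [Real.log_rpow hA, Real.log_mul (by positivity) (by positivity), Real.log_rpow hc,
      Real.log_rpow hV] at this
  rw [renyiEnt_eq hv, renyiEnt_eq hv, show 2 * (1 + σ / (1 - σ)) = 2 / (1 - σ) by field_simp; ring,
    show 2 * (1 + -σ / (1 + σ)) = 2 / (1 + σ) by field_simp; ring]
  have hpair : ((1 + σ / (1 - σ)) * Real.log (∑ i, ‖v i‖ ^ 2) - Real.log A) / (σ / (1 - σ)) +
      ((1 + -σ / (1 + σ)) * Real.log (∑ i, ‖v i‖ ^ 2) - Real.log V) / (-σ / (1 + σ)) =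
      ((1 + σ) * Real.log V - (1 - σ) * Real.log A) / σ := by
    field_simp
    ring
  rw [hpair, le_div_iff₀ hσ₀]
  linarith

theorem hasDerivAt_rpow_one_add {x : ℝ} (hx : 0 ≤ x) :
    HasDerivAt (fun ρ : ℝ => x ^ (1 + ρ)) (x * Real.log x) 0 := by
  rcases hx.eq_or_lt with rfl | hx
  · have hzero : (fun ρ : ℝ => (0 : ℝ) ^ (1 + ρ)) =ᶠ[𝓝 0] fun _ => 0 := by
      filter_upwards [Ioi_mem_nhds (show (-1 : ℝ) < 0 by norm_num)] with ρ hρ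
      exact Real.zero_rpow (by rw [Set.mem_Ioi] at hρ; linarith)
    simpa using (hasDerivAt_const (0 : ℝ) (0 : ℝ)).congr_of_eventuallyEq hzero
  · simpa [mul_comm] using ((hasDerivAt_id (0 : ℝ)).const_add 1).const_rpow hx

theorem tendsto_renyiEnt_shannonEnt {v : n → ℂ} (hv : v ≠ 0) :
    Tendsto (fun ρ => renyiEnt ρ v) (𝓝[≠] 0) (𝓝 (shannonEnt v)) := by
  set q : n → ℝ := fun j => ‖v j‖ ^ 2 / ∑ i, ‖v i‖ ^ 2
  have hq : ∑ j, q j = 1 := by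
    rw [← sum_div, div_self (by simpa using (sum_norm_rpow_pos hv 2).ne')]
  have hG : HasDerivAt (fun ρ : ℝ => Real.log (∑ j, q j ^ (1 + ρ)))
      (∑ j, q j * Real.log (q j)) 0 := by
    have := (HasDerivAt.fun_sum (u := univ) fun j _ =>
      hasDerivAt_rpow_one_add (x := q j) (by positivity)).log (by simp [hq])
    simpa [hq] using this
  refine hG.tendsto_slope.neg.congr' (eventually_nhdsWithin_of_forall fun ρ hρ => ?_)
  simp only [slope_def_field, add_zero, Real.rpow_one, hq, Real.log_one, sub_zero, renyiEnt,
    one_div, neg_mul, neg_inj]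
  exact div_eq_inv_mul _ _

theorem le_two_mul_shannonEnt_of_le_renyiEnt_add {v : n → ℂ} (hv : v ≠ 0) {C : ℝ}
    (h : ∀ σ, 0 < σ → σ < 1 → C ≤ renyiEnt (σ / (1 - σ)) v + renyiEnt (-σ / (1 + σ)) v) :
    C ≤ 2 * shannonEnt v := by
  have hto : ∀ f : ℝ → ℝ, ContinuousAt f 0 → f 0 = 0 → (∀ σ ∈ Set.Ioo (0 : ℝ) 1, f σ ≠ 0) →
      Tendsto f (𝓝[>] 0) (𝓝[≠] 0) := fun f hf h0 hne => by
    refine tendsto_nhdsWithin_iff.2 ⟨?_, ?_⟩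
    · simpa [h0] using hf.tendsto.mono_left nhdsWithin_le_nhds
    · filter_upwards [Ioo_mem_nhdsGT zero_lt_one] with σ hσ using hne σ hσ
  have h₁ := hto (fun σ => σ / (1 - σ)) (by fun_prop (disch := norm_num)) (by simp)
    fun σ hσ => (div_pos hσ.1 (by linarith [hσ.2])).ne'
  have h₂ := hto (fun σ => -σ / (1 + σ)) (by fun_prop (disch := norm_num)) (by simp)
    fun σ hσ => (div_neg_of_neg_of_pos (by linarith [hσ.1]) (by linarith [hσ.1])).ne
  have hlim := ((tendsto_renyiEnt_shannonEnt hv).comp h₁).add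
    ((tendsto_renyiEnt_shannonEnt hv).comp h₂)
  rw [← two_mul] at hlim
  exact ge_of_tendsto hlim
    (by filter_upwards [Ioo_mem_nhdsGT zero_lt_one] with σ hσ using h σ hσ.1 hσ.2)

end Entropy

/-- Entropy lower bounds for eigenvectors of an
equi-transmitting star graph. -/
theorem entropy_bound_equitransmitting_star (B : ℕ) (hB : 2 ≤ B)
    (E : Matrix (Fin B) (Fin B) ℂ) (hE : IsEquiTransStd E)
    (L : Fin B → ℝ) (k : ℝ)
    (Δ : Matrix (Fin B) (Fin B) ℂ)
    (hΔ : Δ = Matrix.diagonal fun j => Complex.exp (Complex.I * k * L j))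
    (U : Matrix (Fin B ⊕ Fin B) (Fin B ⊕ Fin B) ℂ)
    (hU : U = Matrix.fromBlocks 0 (Δ * E) Δ 0)
    (a : Fin B ⊕ Fin B → ℂ) (ha : a ≠ 0)
    (heig : ∃ μ : ℂ, U.mulVec a = μ • a) :
    shannonEnt a ≥ (1 / 2) * Real.log ((B : ℝ) - 1) + Real.log 2 ∧
    ∀ σ : ℝ, 0 < σ → σ < 1 →
      renyiEnt (σ / (1 - σ)) a + renyiEnt (-σ / (1 + σ)) a ≥
        Real.log ((B : ℝ) - 1) + 2 * Real.log 2 := by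
  obtain ⟨hEU, hdiag, hoff, -⟩ := hE
  obtain ⟨μ, hμ⟩ := heig
  subst hU hΔ
  have hE₂ := sum_norm_sq_mulVec_of_mem_unitaryGroup hEU
  obtain ⟨hsym, hEy⟩ := norm_inl_eq_norm_inr_of_fromBlocks_mulVec_eq_smul
    (fun j => by simp [Complex.norm_exp]) hE₂ ha hμ
  have hy := comp_inr_ne_zero_of_norm_inl_eq ha hsym
  have hB₁ : (1 : ℝ) ≤ B - 1 := by
    have : (2 : ℝ) ≤ B := by exact_mod_cast hB
    linarith
  set c := 1 / √((B : ℝ) - 1) with hc_def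
  have hc : 0 < c := by positivity
  have hEc : ∀ i j, ‖E i j‖ ≤ c := fun i j => by
    rcases eq_or_ne i j with rfl | hij
    · simp [hdiag, hc.le]
    · exact (hoff i j hij).le
  have hlogc : -2 * Real.log c = Real.log ((B : ℝ) - 1) := by
    rw [hc_def, one_div, Real.log_inv, Real.log_sqrt (by linarith)]
    ring
  have hpair : ∀ σ : ℝ, 0 < σ → σ < 1 →
      renyiEnt (σ / (1 - σ)) a + renyiEnt (-σ / (1 + σ)) a ≥
        Real.log ((B : ℝ) - 1) + 2 * Real.log 2 := fun σ hσ₀ hσ₁ => by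
    have hint := rpow_sum_norm_mulVec_le (fun u => (hE₂ u).le) hc.le hEc hσ₀.le hσ₁ (a ∘ .inr)
    simp only [hEy] at hint
    have := neg_two_mul_log_le_renyiEnt_add_renyiEnt hy hc hσ₀ hσ₁ hint
    rw [renyiEnt_eq_log_two_add hsym hy (div_pos hσ₀ (by linarith)).ne',
      renyiEnt_eq_log_two_add hsym hy (div_neg_of_neg_of_pos (by linarith) (by linarith)).ne]
    linarith
  exact ⟨by linarith [le_two_mul_shannonEnt_of_le_renyiEnt_add ha hpair], hpair⟩

end
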